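/- Lemma (per-iteration merit and distance bounds for OptDE): Suppose Assumptions 1 and 2 hold and run the OptDE algorithm (with parameter σ ≥ 0). Then for every k ∈ [K] and every D > 0, sup{ ⟨F(w_k), w_k − w⟩ : w ∈ 𝒲, ‖w_k − w‖ ≤ D } ≤ (1 + δ/(αγ)) D L ( ‖w_k − z_{k−1}‖ + ‖z_{k−1} − w_{k−1}‖ ). Moreover, if in addition Assumption 4 holds with σ > 0 and w* is its σ-weak solution, then ‖w_k − w*‖ ≤ (1 + δ/(αγ)) (L/σ) ( ‖w_k − z_{k−1}‖ + ‖z_{k−1} − w_{k−1}‖ ). -/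

import Mathlib

/-!
`w k` is a prox step from `z (k - 1)` driven by `F (w (k - 1))`. Its first-order optimality
condition, together with `‖∇½‖·‖²‖_* ≤ δ‖·‖`, bounds `⟪F (w (k - 1)), w k - v⟫` by
`(δ L / (α γ)) ‖w k - v‖ ‖w k - z (k - 1)‖`, and Lipschitz continuity of `F` bounds the error
`⟪F (w k) - F (w (k - 1)), w k - v⟫` by `L ‖w k - v‖ ‖w k - w (k - 1)‖`. For the distance bound,
strong convexity makes the Bregman sum in the weak-solution inequality at least
`γ ‖w k - w*‖²`, so `σ ‖w k - w*‖² ≤ ⟪F (w k), w k - w*⟫`, and the merit bound at `v = w*`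
finishes the argument.
-/

open scoped RealInnerProductSpace
open Finset MeasureTheory

/-- `Vec d` is the ambient space `ℝ^d` with its standard inner product. -/
abbrev Vec (d : ℕ) := EuclideanSpace ℝ (Fin d)

/-- The dual norm `‖y‖_* = sup_{nrm x ≤ 1} ⟪x, y⟫` of a (general) norm `nrm` on `ℝ^d`. -/
noncomputable def dualNorm {d : ℕ} (nrm : Vec d → ℝ) (y : Vec d) : ℝ :=
  sSup ((fun x => (⟪x, y⟫ : ℝ)) '' {x | nrm x ≤ 1})

/-- The Bregman divergence `V_v(w) = ½‖w‖² − ½‖v‖² − ⟪∇½‖v‖², w − v⟫` of `½ nrm²`,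
where `g` is the gradient map of `½ nrm²`. -/
noncomputable def breg {d : ℕ} (nrm : Vec d → ℝ) (g : Vec d → Vec d) (v w : Vec d) : ℝ :=
  nrm w ^ 2 / 2 - nrm v ^ 2 / 2 - ⟪g v, w - v⟫

theorem Seminorm.exists_pos_mul_norm_le {E : Type*} [NormedAddCommGroup E] [NormedSpace ℝ E]
    [FiniteDimensional ℝ E] (p : Seminorm ℝ E) (hp : ∀ x, x ≠ 0 → 0 < p x) :
    ∃ m, 0 < m ∧ ∀ x, m * ‖x‖ ≤ p x := by
  obtain ⟨m, hm, hmin⟩ := (isCompact_sphere (0 : E) 1).exists_forall_le'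
    p.convexOn.locallyLipschitz.continuous.continuousOn
    (fun x hx => hp x (ne_zero_of_mem_unit_sphere ⟨x, hx⟩))
  refine ⟨m, hm, fun x => ?_⟩
  rcases eq_or_ne x 0 with rfl | hx
  · simp
  have hx' : 0 < ‖x‖ := norm_pos_iff.mpr hx
  have := hmin (‖x‖⁻¹ • x) (by simp [norm_smul, hx'.ne'])
  rw [map_smul_eq_mul, norm_inv, norm_norm, le_inv_mul_iff₀ hx'] at this
  linarith

theorem IsMinOn.hasFDerivAt_sub_nonneg {E : Type*} [NormedAddCommGroup E] [NormedSpace ℝ E]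
    {f : E → ℝ} {f' : E →L[ℝ] ℝ} {s : Set E} {a y : E} (h : IsMinOn f s a) (hs : Convex ℝ s)
    (ha : a ∈ s) (hy : y ∈ s) (hf : HasFDerivAt f f' a) : 0 ≤ f' (y - a) :=
  (IsMinOn.localize h).hasFDerivWithinAt_nonneg hf.hasFDerivWithinAt
    (sub_mem_posTangentConeAt_of_segment_subset (hs.segment_subset ha hy))

theorem le_div_of_mul_sq_le_mul {σ K x : ℝ} (hσ : 0 < σ) (hK : 0 ≤ K) (hx : 0 ≤ x)
    (h : σ * x ^ 2 ≤ K * x) : x ≤ K / σ := by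
  rw [le_div_iff₀ hσ]
  rcases hx.eq_or_lt with rfl | hx
  · simpa using hK
  · exact le_of_mul_le_mul_left (by linarith) hx

section Vec

variable {d : ℕ}

theorem inner_le_mul_dualNorm (p : Seminorm ℝ (Vec d)) (hp : ∀ x, x ≠ 0 → 0 < p x)
    (u y : Vec d) : ⟪u, y⟫ ≤ p u * dualNorm p y := by
  rcases eq_or_ne u 0 with rfl | hu
  · simp
  -- `dualNorm` is an `sSup`, junk unless the set is bounded; definiteness of `p` bounds it.
  obtain ⟨m, hm, hmp⟩ := p.exists_pos_mul_norm_le hp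
  have hbdd : BddAbove ((fun x => ⟪x, y⟫) '' {x | p x ≤ 1}) := by
    refine ⟨‖y‖ / m, ?_⟩
    rintro _ ⟨x, hx, rfl⟩
    have hx' : ‖x‖ ≤ 1 / m := by rw [le_div_iff₀ hm]; linarith [hmp x, hx.out]
    calc ⟪x, y⟫ ≤ ‖x‖ * ‖y‖ := real_inner_le_norm x y
      _ ≤ 1 / m * ‖y‖ := by gcongr
      _ = ‖y‖ / m := by ring
  have hu' := hp u hu
  have hle : ⟪(p u)⁻¹ • u, y⟫ ≤ dualNorm p y := by
    refine le_csSup hbdd ⟨_, ?_, rfl⟩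
    show p _ ≤ 1
    rw [map_smul_eq_mul, Real.norm_eq_abs, abs_inv, abs_of_pos hu',
      inv_mul_cancel₀ hu'.ne']
  rw [real_inner_smul_left, inv_mul_le_iff₀ hu'] at hle
  exact hle

theorem inner_sub_le_of_isMinOn_prox (p : Seminorm ℝ (Vec d)) (hp : ∀ x, x ≠ 0 → 0 < p x)
    {g : Vec d → Vec d} {W : Set (Vec d)} {γ δ : ℝ} (hγ : 0 < γ)
    (hgrad : ∀ x, HasGradientAt (fun v => p v ^ 2 / 2) (g x) x)
    (hgbound : ∀ x, dualNorm p (g x) ≤ δ * p x) (hW : Convex ℝ W) {c z w v : Vec d}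
    (hw : w ∈ W) (hmin : IsMinOn (fun x => ⟪c, x⟫ + 1 / (2 * γ) * p (x - z) ^ 2) W w)
    (hv : v ∈ W) : ⟪c, w - v⟫ ≤ δ / γ * p (w - v) * p (w - z) := by
  have hobj : (fun x => ⟪c, x⟫ + 1 / (2 * γ) * p (x - z) ^ 2) =
      fun x => ⟪c, x⟫ + 1 / γ * (p (x - z) ^ 2 / 2) := by
    funext x; ring
  rw [hobj] at hmin
  have hfo := hmin.hasFDerivAt_sub_nonneg hW hw hv ((innerSL ℝ c).hasFDerivAt.add
    (((hgrad (w - z)).hasFDerivAt.comp w ((hasFDerivAt_id w).sub_const z)).const_mul (1 / γ)))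
  simp only [one_div, ContinuousLinearMap.comp_id, add_apply, coe_innerSL_apply, smul_apply,
    InnerProductSpace.toDual_apply_apply, smul_eq_mul] at hfo
  have hg : ⟪g (w - z), v - w⟫ ≤ δ * p (w - v) * p (w - z) := by
    calc ⟪g (w - z), v - w⟫ = ⟪v - w, g (w - z)⟫ := real_inner_comm _ _
      _ ≤ p (v - w) * dualNorm p (g (w - z)) := inner_le_mul_dualNorm p hp _ _
      _ ≤ p (v - w) * (δ * p (w - z)) := by gcongr; exact hgbound _
      _ = δ * p (w - v) * p (w - z) := by rw [map_sub_rev]; ring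
  have hcv : ⟪c, w - v⟫ = -⟪c, v - w⟫ := by rw [← inner_neg_right, neg_sub]
  rw [hcv, div_mul_eq_mul_div, div_mul_eq_mul_div, le_div_iff₀ hγ]
  have hγfo := mul_nonneg hγ.le hfo
  rw [mul_add, ← mul_assoc, mul_inv_cancel₀ hγ.ne', one_mul] at hγfo
  linarith

theorem inner_sub_le_of_isMinOn_optimisticStep (p : Seminorm ℝ (Vec d))
    (hp : ∀ x, x ≠ 0 → 0 < p x) {F g : Vec d → Vec d} {W : Set (Vec d)} {L γ δ α : ℝ}
    (hL : 0 < L) (hγ : 0 < γ) (hδ : 0 ≤ δ) (hα : 0 < α)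
    (hLip : ∀ v ∈ W, ∀ u ∈ W, dualNorm p (F v - F u) ≤ L * p (v - u))
    (hgrad : ∀ x, HasGradientAt (fun v => p v ^ 2 / 2) (g x) x)
    (hgbound : ∀ x, dualNorm p (g x) ≤ δ * p x) (hW : Convex ℝ W) {x z w v : Vec d}
    (hx : x ∈ W) (hw : w ∈ W)
    (hmin : IsMinOn (fun y => ⟪(α / L) • F x, y⟫ + 1 / (2 * γ) * p (y - z) ^ 2) W w)
    (hv : v ∈ W) :
    ⟪F w, w - v⟫ ≤ (1 + δ / (α * γ)) * p (w - v) * L * (p (w - z) + p (z - x)) := by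
  have hprox := inner_sub_le_of_isMinOn_prox p hp hγ hgrad hgbound hW hw hmin hv
  rw [real_inner_smul_left] at hprox
  have hlip : ⟪F w - F x, w - v⟫ ≤ p (w - v) * (L * p (w - x)) := by
    rw [real_inner_comm]
    exact (inner_le_mul_dualNorm p hp _ _).trans (by gcongr; exact hLip w hw x hx)
  have htri : p (w - x) ≤ p (w - z) + p (z - x) := by
    simpa using map_add_le_add p (w - z) (z - x)
  have hsplit : ⟪F w, w - v⟫ = ⟪F w - F x, w - v⟫ + L / α * (α / L * ⟪F x, w - v⟫) := by
    rw [inner_sub_left]; field_simp; ring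
  calc ⟪F w, w - v⟫
      ≤ p (w - v) * (L * (p (w - z) + p (z - x))) + L / α * (δ / γ * p (w - v) * p (w - z)) := by
        rw [hsplit]
        gcongr
        exact hlip.trans (by gcongr)
    _ = (1 + δ / (α * γ)) * p (w - v) * L * (p (w - z) + p (z - x))
          - δ / (α * γ) * p (w - v) * L * p (z - x) := by
        ring
    _ ≤ (1 + δ / (α * γ)) * p (w - v) * L * (p (w - z) + p (z - x)) := by
        apply sub_le_self
        positivity

theorem mul_sq_le_breg (p : Seminorm ℝ (Vec d)) {g : Vec d → Vec d} {γ : ℝ}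
    (hstrong : ∀ v x, p v ^ 2 / 2 + ⟪g v, x - v⟫ + γ / 2 * p (x - v) ^ 2 ≤ p x ^ 2 / 2)
    (v w : Vec d) : γ / 2 * p (w - v) ^ 2 ≤ breg p g v w := by
  unfold breg
  linarith [hstrong v w]

theorem mul_sq_le_inner_of_mul_breg_add_breg_le (p : Seminorm ℝ (Vec d)) {F g : Vec d → Vec d}
    {γ σ : ℝ} (hγ : 0 < γ) (hσ : 0 ≤ σ)
    (hstrong : ∀ v x, p v ^ 2 / 2 + ⟪g v, x - v⟫ + γ / 2 * p (x - v) ^ 2 ≤ p x ^ 2 / 2)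
    {w₀ w wstar : Vec d}
    (hweak : σ / γ * (breg p g (w - w₀) (wstar - w₀) + breg p g (wstar - w₀) (w - w₀)) ≤
      ⟪F w, w - wstar⟫) :
    σ * p (w - wstar) ^ 2 ≤ ⟪F w, w - wstar⟫ := by
  have h₁ := mul_sq_le_breg p hstrong (w - w₀) (wstar - w₀)
  have h₂ := mul_sq_le_breg p hstrong (wstar - w₀) (w - w₀)
  rw [sub_sub_sub_cancel_right, map_sub_rev] at h₁
  rw [sub_sub_sub_cancel_right] at h₂
  calc σ * p (w - wstar) ^ 2 = σ / γ * (γ / 2 * p (w - wstar) ^ 2 + γ / 2 * p (w - wstar) ^ 2) := by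
        field_simp; ring
    _ ≤ _ := by gcongr
    _ ≤ _ := hweak

end Vec

theorem optde_per_iteration_bounds_general
    {d : ℕ} (W : Set (Vec d)) (hWcv : Convex ℝ W)
    (F : Vec d → Vec d) (nrm : Vec d → ℝ) (g : Vec d → Vec d)
    (L γ δ α σ : ℝ)
    -- `nrm` is a norm on ℝ^d
    (hnrm_pos : ∀ x : Vec d, x ≠ 0 → 0 < nrm x)
    (hnrm_add : ∀ x y : Vec d, nrm (x + y) ≤ nrm x + nrm y)
    (hnrm_smul : ∀ (c : ℝ) (x : Vec d), nrm (c • x) = |c| * nrm x)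
    (hL : 0 < L) (hγ0 : 0 < γ) (hδ : 0 < δ)
    -- Assumption 1
    (hLip : ∀ v ∈ W, ∀ u ∈ W, dualNorm nrm (F v - F u) ≤ L * nrm (v - u))
    -- Assumption 2
    (hgrad : ∀ x : Vec d, HasGradientAt (fun v : Vec d => nrm v ^ 2 / 2) (g x) x)
    (hstrong : ∀ v x : Vec d,
      nrm v ^ 2 / 2 + ⟪g v, x - v⟫ + γ / 2 * nrm (x - v) ^ 2 ≤ nrm x ^ 2 / 2)
    (hgbound : ∀ x : Vec d, dualNorm nrm (g x) ≤ δ * nrm x)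
    -- OptDE algorithm with parameter σ
    (hα0 : 0 < α)
    (w z : ℕ → Vec d) (hw0W : w 0 ∈ W)
    (hwk : ∀ k, 1 ≤ k → w k ∈ W ∧
      IsMinOn (fun x => (⟪(α / L) • F (w (k - 1)), x⟫ : ℝ) +
        1 / (2 * γ) * nrm (x - z (k - 1)) ^ 2) W (w k))
    (K : ℕ)
    (wstar : Vec d) (hwsW : wstar ∈ W) :
    ∀ k ∈ Finset.Icc 1 K,
      (∀ D : ℝ, 0 < D → ∀ v ∈ W, nrm (w k - v) ≤ D →
        (⟪F (w k), w k - v⟫ : ℝ) ≤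
          (1 + δ / (α * γ)) * D * L *
            (nrm (w k - z (k - 1)) + nrm (z (k - 1) - w (k - 1)))) ∧
      (0 < σ →
        (∀ v ∈ W,
          σ / γ * (breg nrm g (v - w 0) (wstar - w 0) + breg nrm g (wstar - w 0) (v - w 0)) ≤
            (⟪F v, v - wstar⟫ : ℝ)) →
        nrm (w k - wstar) ≤
          (1 + δ / (α * γ)) * (L / σ) *
            (nrm (w k - z (k - 1)) + nrm (z (k - 1) - w (k - 1)))) := by
  intro k hk
  let p : Seminorm ℝ (Vec d) := .of nrm hnrm_add hnrm_smul
  set S := nrm (w k - z (k - 1)) + nrm (z (k - 1) - w (k - 1))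
  have hS : 0 ≤ S := add_nonneg (apply_nonneg p _) (apply_nonneg p _)
  obtain ⟨hwk_mem, hwk_min⟩ := hwk k (Finset.mem_Icc.mp hk).1
  have hwprev : w (k - 1) ∈ W := by
    rcases Nat.eq_zero_or_pos (k - 1) with h | h
    · exact h ▸ hw0W
    · exact (hwk (k - 1) h).1
  have hmerit : ∀ v ∈ W, ⟪F (w k), w k - v⟫ ≤ (1 + δ / (α * γ)) * nrm (w k - v) * L * S :=
    fun v hv => inner_sub_le_of_isMinOn_optimisticStep p hnrm_pos hL hγ0 hδ.le hα0 hLip hgrad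
      hgbound hWcv hwprev hwk_mem hwk_min hv
  refine ⟨fun D _ v hv hvD => (hmerit v hv).trans (by gcongr), fun hσ hweak => ?_⟩
  have hsq : σ * nrm (w k - wstar) ^ 2 ≤ ⟪F (w k), w k - wstar⟫ :=
    mul_sq_le_inner_of_mul_breg_add_breg_le p hγ0 hσ.le hstrong (hweak (w k) hwk_mem)
  refine (le_div_of_mul_sq_le_mul (x := nrm (w k - wstar)) hσ (by positivity)
    (apply_nonneg p _) ?_).trans_eq
    (by ring : (1 + δ / (α * γ)) * L * S / σ = _)
  linarith [hsq.trans (hmerit wstar hwsW)]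

/-- **Lemma (per-iteration merit and distance bounds for OptDE).**
Under Assumptions 1 and 2, running OptDE with parameter `σ ≥ 0`, for every `k ∈ [K]`
and `D > 0`,
`sup{⟪F(w_k), w_k − v⟫ : v ∈ W, ‖w_k − v‖ ≤ D}
  ≤ (1 + δ/(αγ)) D L (‖w_k − z_{k−1}‖ + ‖z_{k−1} − w_{k−1}‖)`;
moreover, if `σ > 0` and Assumption 4 holds with σ-weak solution `w*`, then
`‖w_k − w*‖ ≤ (1 + δ/(αγ)) (L/σ) (‖w_k − z_{k−1}‖ + ‖z_{k−1} − w_{k−1}‖)`. -/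
theorem optde_per_iteration_bounds
    {d : ℕ} (W : Set (Vec d)) (hWne : W.Nonempty) (hWcl : IsClosed W) (hWcv : Convex ℝ W)
    (F : Vec d → Vec d) (nrm : Vec d → ℝ) (g : Vec d → Vec d)
    (L γ δ α σ : ℝ)
    -- `nrm` is a norm on ℝ^d
    (hnrm_pos : ∀ x : Vec d, x ≠ 0 → 0 < nrm x)
    (hnrm_add : ∀ x y : Vec d, nrm (x + y) ≤ nrm x + nrm y)
    (hnrm_smul : ∀ (c : ℝ) (x : Vec d), nrm (c • x) = |c| * nrm x)
    (hL : 0 < L) (hγ0 : 0 < γ) (hγ1 : γ ≤ 1) (hδ : 0 < δ) (hσ : 0 ≤ σ)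
    -- Assumption 1
    (hLip : ∀ v ∈ W, ∀ u ∈ W, dualNorm nrm (F v - F u) ≤ L * nrm (v - u))
    -- Assumption 2
    (hgrad : ∀ x : Vec d, HasGradientAt (fun v : Vec d => nrm v ^ 2 / 2) (g x) x)
    (hstrong : ∀ v x : Vec d,
      nrm v ^ 2 / 2 + ⟪g v, x - v⟫ + γ / 2 * nrm (x - v) ^ 2 ≤ nrm x ^ 2 / 2)
    (hgbound : ∀ x : Vec d, dualNorm nrm (g x) ≤ δ * nrm x)
    -- OptDE algorithm with parameter σ
    (hα0 : 0 < α)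
    (hαle : α ≤ min (1 / (4 * Real.sqrt 2)) (Real.sqrt 3 / (4 * Real.sqrt γ)))
    (a A : ℕ → ℝ) (hA0 : A 0 = 0)
    (ha : ∀ k, 1 ≤ k → a k = α * γ * (1 + σ * A (k - 1)) / L)
    (hArec : ∀ k, 1 ≤ k → A k = A (k - 1) + a k)
    (w z : ℕ → Vec d) (hw0W : w 0 ∈ W) (hz0 : z 0 = w 0)
    (hwk : ∀ k, 1 ≤ k → w k ∈ W ∧
      IsMinOn (fun x => (⟪(α / L) • F (w (k - 1)), x⟫ : ℝ) +
        1 / (2 * γ) * nrm (x - z (k - 1)) ^ 2) W (w k))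
    (hzk : ∀ k, 1 ≤ k → z k ∈ W ∧
      IsMinOn (fun x =>
        (⟪∑ i ∈ Finset.Icc 1 k, a i • (F (w i) - (σ / γ) • g (w i - w 0)), x⟫ : ℝ) +
        (1 + σ * A k) / (2 * γ) * nrm (x - w 0) ^ 2) W (z k))
    (K : ℕ) (hK : 1 ≤ K)
    (wstar : Vec d) (hwsW : wstar ∈ W) :
    ∀ k ∈ Finset.Icc 1 K,
      (∀ D : ℝ, 0 < D → ∀ v ∈ W, nrm (w k - v) ≤ D →
        (⟪F (w k), w k - v⟫ : ℝ) ≤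
          (1 + δ / (α * γ)) * D * L *
            (nrm (w k - z (k - 1)) + nrm (z (k - 1) - w (k - 1)))) ∧
      (0 < σ →
        (∀ v ∈ W,
          σ / γ * (breg nrm g (v - w 0) (wstar - w 0) + breg nrm g (wstar - w 0) (v - w 0)) ≤
            (⟪F v, v - wstar⟫ : ℝ)) →
        nrm (w k - wstar) ≤
          (1 + δ / (α * γ)) * (L / σ) *
            (nrm (w k - z (k - 1)) + nrm (z (k - 1) - w (k - 1)))) :=
  optde_per_iteration_bounds_general W hWcv F nrm g L γ δ α σ hnrm_pos hnrm_add hnrm_smul hL hγ0 hδ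
    hLip hgrad hstrong hgbound hα0 w z hw0W hwk K wstar hwsW
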